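/- For real parameters M > 0 and a with |a| < 3^{1/4} 2^{-1/2} M, and for all r > r_+ = M + sqrt(M^2-a^2), the quantity (3r^4 - 6a^2 r^2 - a^4)/(3r^2 - a^2)^2 is strictly positive, and (3r^4 + a^4)/(3r^2 - a^2)^2 is strictly positive. -/
import Mathlib

set_option maxHeartbeats 1000000 in
/-- Positivity of the coefficients in the Morawetz estimate for null geodesics in Kerr:
for `|a| < 3^{1/4} 2^{-1/2} M` and all `r > r₊ = M + √(M² - a²)`, both
`(3r⁴ - 6a²r² - a⁴)/(3r² - a²)²` and `(3r⁴ + a⁴)/(3r² - a²)²` are strictly positive. -/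
theorem stmt13 (M a : ℝ) (hM : 0 < M)
    (ha : |a| < (3 : ℝ) ^ ((1 : ℝ) / 4) * (2 : ℝ) ^ (-(1 : ℝ) / 2) * M) :
    ∀ r : ℝ, M + Real.sqrt (M ^ 2 - a ^ 2) < r →
      0 < (3 * r ^ 4 - 6 * a ^ 2 * r ^ 2 - a ^ 4) / (3 * r ^ 2 - a ^ 2) ^ 2 ∧
      0 < (3 * r ^ 4 + a ^ 4) / (3 * r ^ 2 - a ^ 2) ^ 2 := by
  intro r hr
  set t := Real.sqrt 3 with ht
  have ht2 : t ^ 2 = 3 := Real.sq_sqrt (by norm_num)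
  have ht1 : 1 < t := by nlinarith [Real.sqrt_nonneg 3]
  have htlt : t < 2 := by nlinarith [Real.sqrt_nonneg 3]
  have hc : ((3 : ℝ) ^ ((1 : ℝ) / 4) * (2 : ℝ) ^ (-(1 : ℝ) / 2) * M) ^ 2 = t / 2 * M ^ 2 := by
    rw [mul_pow, mul_pow, ← Real.rpow_natCast ((3:ℝ) ^ ((1:ℝ)/4)) 2,
        ← Real.rpow_natCast ((2:ℝ) ^ (-(1:ℝ)/2)) 2,
        ← Real.rpow_mul (by norm_num), ← Real.rpow_mul (by norm_num)]
    norm_num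
    left
    rw [ht, Real.sqrt_eq_rpow]
    ring
  have ha2 : a ^ 2 < t / 2 * M ^ 2 := by
    rw [← hc]
    calc a ^ 2 = |a| ^ 2 := (sq_abs a).symm
    _ < _ := by
      apply pow_lt_pow_left₀ ha (abs_nonneg a)
      norm_num
  have haM : a ^ 2 < M ^ 2 := by nlinarith
  set s := Real.sqrt (M ^ 2 - a ^ 2) with hs
  have hs0 : 0 < s := Real.sqrt_pos.mpr (by nlinarith)
  have hs2 : s ^ 2 = M ^ 2 - a ^ 2 := Real.sq_sqrt (by nlinarith)
  have hrpos : 0 < r := by nlinarith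
  have hr2 : (M + s) ^ 2 < r ^ 2 := by nlinarith
  have h3r : 0 < 3 * r ^ 2 - a ^ 2 := by nlinarith
  have hden := pow_pos h3r 2
  -- key positivity of 2s - (t-1)M
  have hd : (2 - t) * M ^ 2 < 2 * s ^ 2 := by nlinarith
  have h1 : 0 < 2 * s - (t - 1) * M := by nlinarith [sq_nonneg (2*s - (t-1)*M), sq_nonneg (2*s + (t-1)*M)]
  have h2t : 0 < 2 - t := by linarith
  -- numerator at X = (M+s)^2 is nonneg, via explicit certificate
  have hA : 0 ≤ (2 - t) * M ^ 3 * (2 * s - (t - 1) * M) :=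
    mul_nonneg (mul_nonneg h2t.le (pow_pos hM 3).le) h1.le
  have hB : 0 ≤ (2 * s ^ 2 - (2 - t) * M ^ 2) * s * M :=
    mul_nonneg (mul_nonneg (by linarith) hs0.le) hM.le
  have hC : 0 ≤ (18 - 4 * t) * ((2 * s ^ 2 - (2 - t) * M ^ 2) * M ^ 2) :=
    mul_nonneg (by linarith) (mul_nonneg (by linarith) (pow_pos hM 2).le)
  have hD : 0 ≤ (2 * s ^ 2 - (2 - t) * M ^ 2) ^ 2 := sq_nonneg _
  have hid : 8 * s ^ 4 + 24 * M * s ^ 3 + 20 * M ^ 2 * s ^ 2 - 4 * M ^ 4 =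
      6 * ((2 - t) * M ^ 3 * (2 * s - (t - 1) * M))
      + 12 * ((2 * s ^ 2 - (2 - t) * M ^ 2) * s * M)
      + (18 - 4 * t) * ((2 * s ^ 2 - (2 - t) * M ^ 2) * M ^ 2)
      + 2 * (2 * s ^ 2 - (2 - t) * M ^ 2) ^ 2
      - 4 * (t ^ 2 - 3) * M ^ 4 := by ring
  have he : (t ^ 2 - 3) * M ^ 4 = 0 := by rw [ht2]; ring
  have hP : 0 ≤ 8 * s ^ 4 + 24 * M * s ^ 3 + 20 * M ^ 2 * s ^ 2 - 4 * M ^ 4 := by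
    rw [hid]; linarith
  have hab : a ^ 2 = M ^ 2 - s ^ 2 := by linarith
  have hnum : 3 * (M + s) ^ 4 - 6 * a ^ 2 * (M + s) ^ 2 - a ^ 4 =
      8 * s ^ 4 + 24 * M * s ^ 3 + 20 * M ^ 2 * s ^ 2 - 4 * M ^ 4 := by
    linear_combination (-(6 * (M + s) ^ 2) - (a ^ 2 + M ^ 2 - s ^ 2)) * hab
  have hkey : 0 ≤ 3 * (M + s) ^ 4 - 6 * a ^ 2 * (M + s) ^ 2 - a ^ 4 := by
    rw [hnum]; exact hP
  have hX : a ^ 2 < (M + s) ^ 2 := by nlinarith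
  constructor
  · apply div_pos _ hden
    have hfac : 0 < (r ^ 2 - (M + s) ^ 2) * (3 * r ^ 2 + 3 * (M + s) ^ 2 - 6 * a ^ 2) :=
      mul_pos (by linarith) (by nlinarith)
    nlinarith [hfac, hkey]
  · apply div_pos _ hden
    nlinarith [pow_pos hrpos 4, sq_nonneg (a ^ 2)]
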